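/- arXiv:1908.10826 — 7 statements merged into one kernel-verified Lean document; each statement's English description precedes it below -/
import Mathlib

section
/- Let V be a finite type, let dom : V → V → Prop be irreflexive and transitive, and let scan : V → ℕ and upd : V → ℕ∞ be arbitrary functions. Then there exists exactly one function pt : V → ℕ∞ such that for every x ∈ V, pt x = min({upd x} ∪ {pt y | dom y x ∧ (↑(scan x) : ℕ∞) < pt y}), where the minimum is taken in ℕ∞ over this nonempty finite set. -/
/-- The paper's inductive rules I-1 and I-2 form a proper inductive definition:
there is a unique function `pt : V → ℕ∞` satisfying, for every `x`,
`pt x = min({upd x} ∪ {pt y | dom y x ∧ ↑(scan x) < pt y})`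
(minimum of a nonempty finite subset of `ℕ∞`, i.e. its infimum). -/
theorem pt_exists_unique {V : Type*} [Fintype V] (dom : V → V → Prop)
    (hirr : ∀ x, ¬ dom x x)
    (htrans : ∀ x y z, dom x y → dom y z → dom x z)
    (scan : V → ℕ) (upd : V → ℕ∞) :
    ∃! pt : V → ℕ∞, ∀ x, pt x =
      sInf ({upd x} ∪ {t | ∃ y, dom y x ∧ (↑(scan x) : ℕ∞) < pt y ∧ pt y = t}) := by
  haveI : IsTrans V dom := ⟨htrans⟩
  haveI : IsIrrefl V dom := ⟨hirr⟩
  have hwf : WellFounded dom := Finite.wellFounded_of_trans_of_irrefl dom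
  set F : ∀ x : V, (∀ y, dom y x → ℕ∞) → ℕ∞ := fun x rec =>
    sInf ({upd x} ∪ {t | ∃ y, ∃ h : dom y x, (↑(scan x) : ℕ∞) < rec y h ∧ rec y h = t})
    with hF
  refine ⟨hwf.fix F, ?_, ?_⟩
  · intro x
    rw [hwf.fix_eq, hF]
    apply congrArg sInf
    ext t
    simp only [Set.mem_union, Set.mem_singleton_iff, Set.mem_setOf_eq, exists_prop]
  · intro pt2 h2
    funext x
    induction x using hwf.induction with
    | _ x ih =>
      rw [h2 x, hwf.fix_eq, hF]
      apply congrArg sInf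
      ext t
      simp only [Set.mem_union, Set.mem_singleton_iff, Set.mem_setOf_eq]
      constructor
      · rintro (h | ⟨y, hy, hlt, rfl⟩)
        · exact Or.inl h
        · exact Or.inr ⟨y, hy, by rw [ih y hy] at hlt ⊢; exact ⟨hlt, rfl⟩⟩
      · rintro (h | ⟨y, hy, hlt, rfl⟩)
        · exact Or.inl h
        · exact Or.inr ⟨y, hy, by rw [← ih y hy] at hlt ⊢; exact ⟨hlt, rfl⟩⟩
end

section
/- For every x ∈ V, (↑(scan x) : ℕ∞) < pt x and pt x ≤ upd x; that is, pt x lies in the half-open interval (scan x, upd x]. -/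
/-- Observation 14 (obs:genptin): `pt x` lies in the half-open interval `(scan x, upd x]`. -/
theorem pt_in_interval {V : Type*} [Fintype V] (dom : V → V → Prop)
    (hirr : ∀ x, ¬ dom x x)
    (htrans : ∀ x y z, dom x y → dom y z → dom x z)
    (scan : V → ℕ) (upd : V → ℕ∞)
    (hsu : ∀ x, (↑(scan x) : ℕ∞) < upd x)
    (pt : V → ℕ∞)
    (hpt : ∀ x, pt x =
      sInf ({upd x} ∪ {t | ∃ y, dom y x ∧ (↑(scan x) : ℕ∞) < pt y ∧ pt y = t})) :
    ∀ x, (↑(scan x) : ℕ∞) < pt x ∧ pt x ≤ upd x := by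
  intro x
  constructor
  · rw [hpt x]
    have h1 : (↑(scan x) : ℕ∞) + 1 ≤
        sInf ({upd x} ∪ {t | ∃ y, dom y x ∧ (↑(scan x) : ℕ∞) < pt y ∧ pt y = t}) := by
      apply le_sInf
      rintro t (rfl | ⟨y, _, hy, rfl⟩)
      · exact (ENat.add_one_le_iff (by simp)).mpr (hsu x)
      · exact (ENat.add_one_le_iff (by simp)).mpr hy
    exact lt_of_lt_of_le (by exact_mod_cast Nat.lt_succ_self _) h1
  · rw [hpt x]
    exact sInf_le (Or.inl rfl)
end

section
/- For every x ∈ V with pt x < upd x, there exists y ∈ V such that dom y x, pt y = pt x, and upd y = pt x. -/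
/-- Observation 16 (obs:genlinimpliesupdate): an operation that linearizes strictly before
its own update step linearizes exactly at the update step of some dominating operation. -/
theorem pt_lt_upd_implies_dom_update {V : Type*} [Fintype V] (dom : V → V → Prop)
    (hirr : ∀ x, ¬ dom x x)
    (htrans : ∀ x y z, dom x y → dom y z → dom x z)
    (scan : V → ℕ) (upd : V → ℕ∞)
    (hsu : ∀ x, (↑(scan x) : ℕ∞) < upd x)
    (pt : V → ℕ∞)
    (hpt : ∀ x, pt x =
      sInf ({upd x} ∪ {t | ∃ y, dom y x ∧ (↑(scan x) : ℕ∞) < pt y ∧ pt y = t})) :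
    ∀ x, pt x < upd x → ∃ y, dom y x ∧ pt y = pt x ∧ upd y = pt x := by
  have _ : IsIrrefl V dom := ⟨hirr⟩
  have _ : IsTrans V dom := ⟨fun a b c => htrans a b c⟩
  have hwf : WellFounded dom := Finite.wellFounded_of_trans_of_irrefl dom
  intro x
  induction x using hwf.induction with
  | _ x ih =>
    intro hx
    have hmem : pt x ∈ ({upd x} ∪
        {t | ∃ y, dom y x ∧ (↑(scan x) : ℕ∞) < pt y ∧ pt y = t} : Set ℕ∞) := by
      rw [hpt x]
      exact csInf_mem ⟨upd x, Or.inl rfl⟩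
    rcases hmem with h | ⟨y, hdy, hsc, hpy⟩
    · exact absurd h (ne_of_lt hx)
    · have hle : pt y ≤ upd y := by
        rw [hpt y]; exact sInf_le (Or.inl rfl)
      rcases eq_or_lt_of_le hle with heq | hlt
      · exact ⟨y, hdy, hpy, by rw [← heq, hpy]⟩
      · obtain ⟨z, hzy, hpz, huz⟩ := ih y hdy hlt
        exact ⟨z, htrans z y x hzy hdy, by rw [hpz, hpy], by rw [huz, hpy]⟩
end

section
/- For all x, y ∈ V, if upd x < (↑(scan y) : ℕ∞), then pt x < pt y. -/
/-- Precedence in the precedence graph forces strict linearization order: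
if `x`'s update occurs before `y`'s scan, then `pt x < pt y`. -/
theorem pt_lt_of_precede {V : Type*} [Fintype V] (dom : V → V → Prop)
    (hirr : ∀ x, ¬ dom x x)
    (htrans : ∀ x y z, dom x y → dom y z → dom x z)
    (scan : V → ℕ) (upd : V → ℕ∞)
    (hsu : ∀ x, (↑(scan x) : ℕ∞) < upd x)
    (pt : V → ℕ∞)
    (hpt : ∀ x, pt x =
      sInf ({upd x} ∪ {t | ∃ y, dom y x ∧ (↑(scan x) : ℕ∞) < pt y ∧ pt y = t})) :
    ∀ x y, upd x < (↑(scan y) : ℕ∞) → pt x < pt y := by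
  intro x y hxy
  have hx : pt x ≤ upd x := by
    rw [hpt x]; exact sInf_le (Or.inl rfl)
  have hy : (↑(scan y) : ℕ∞) < pt y := by
    rw [hpt y]
    have hlt : (↑(scan y) : ℕ∞) < ↑(scan y) + 1 := by
      have : ((scan y : ℕ∞) + 1) = ((scan y + 1 : ℕ) : ℕ∞) := by push_cast; ring
      rw [this]; exact_mod_cast Nat.lt_succ_self _
    refine lt_of_lt_of_le hlt (le_sInf ?_)
    rintro b (hb | ⟨z, _, hz, rfl⟩)
    · rw [hb]
      exact (ENat.add_one_le_iff (by simp)).mpr (hsu y)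
    · exact (ENat.add_one_le_iff (by simp)).mpr hz
  exact lt_of_le_of_lt hx (lt_trans hxy hy)
end

section
/- Assume additionally that upd z ≠ (↑(scan w) : ℕ∞) for all z, w ∈ V. For all x, y ∈ V, if dom x y, (↑(scan y) : ℕ∞) < upd x, (↑(scan x) : ℕ∞) < upd y, and pt x < pt y, then pt x < (↑(scan y) : ℕ∞). -/
theorem pt_mem_aux {V : Type*} [Fintype V] (dom : V → V → Prop)
    (scan : V → ℕ) (upd : V → ℕ∞) (pt : V → ℕ∞)
    (hpt : ∀ x, pt x =
      sInf ({upd x} ∪ {t | ∃ y, dom y x ∧ (↑(scan x) : ℕ∞) < pt y ∧ pt y = t})) :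
    ∀ x, pt x ∈ ({upd x} ∪ {t | ∃ y, dom y x ∧ (↑(scan x) : ℕ∞) < pt y ∧ pt y = t} : Set ℕ∞) := by
  intro x
  have hfin : ({upd x} ∪ {t | ∃ y, dom y x ∧ (↑(scan x) : ℕ∞) < pt y ∧ pt y = t} : Set ℕ∞).Finite := by
    apply (Set.finite_singleton _).union
    apply (Set.finite_range pt).subset
    rintro t ⟨y, _, _, rfl⟩
    exact ⟨y, rfl⟩
  have hne : ({upd x} ∪ {t | ∃ y, dom y x ∧ (↑(scan x) : ℕ∞) < pt y ∧ pt y = t} : Set ℕ∞).Nonempty :=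
    ⟨upd x, Or.inl rfl⟩
  have := hne.csInf_mem hfin
  rwa [hpt x]

theorem pt_eq_upd_aux {V : Type*} [Fintype V] (dom : V → V → Prop)
    (hirr : ∀ x, ¬ dom x x)
    (htrans : ∀ x y z, dom x y → dom y z → dom x z)
    (scan : V → ℕ) (upd : V → ℕ∞) (pt : V → ℕ∞)
    (hpt : ∀ x, pt x =
      sInf ({upd x} ∪ {t | ∃ y, dom y x ∧ (↑(scan x) : ℕ∞) < pt y ∧ pt y = t})) :
    ∀ x, ∃ z, pt x = upd z := by
  haveI : IsTrans V dom := ⟨fun a b c => htrans a b c⟩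
  haveI : IsIrrefl V dom := ⟨hirr⟩
  have hwf : WellFounded dom := Finite.wellFounded_of_trans_of_irrefl dom
  intro x
  induction x using hwf.induction with
  | _ x ih =>
    rcases pt_mem_aux dom scan upd pt hpt x with h | ⟨y, hdy, _, hpy⟩
    · exact ⟨x, h⟩
    · rcases ih y hdy with ⟨z, hz⟩
      exact ⟨z, hpy ▸ hz⟩

/-- Statement (14) (pti1less) in the proof of Lemma 10 (forcedom): a dominating
concurrent operation that linearizes first must linearize strictly before the
other operation's scan step. -/
theorem pt_lt_scan_of_dom_concurrent {V : Type*} [Fintype V] (dom : V → V → Prop)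
    (hirr : ∀ x, ¬ dom x x)
    (htrans : ∀ x y z, dom x y → dom y z → dom x z)
    (scan : V → ℕ) (upd : V → ℕ∞)
    (hsu : ∀ x, (↑(scan x) : ℕ∞) < upd x)
    (pt : V → ℕ∞)
    (hpt : ∀ x, pt x =
      sInf ({upd x} ∪ {t | ∃ y, dom y x ∧ (↑(scan x) : ℕ∞) < pt y ∧ pt y = t}))
    (hne : ∀ z w, upd z ≠ (↑(scan w) : ℕ∞)) :
    ∀ x y, dom x y → (↑(scan y) : ℕ∞) < upd x → (↑(scan x) : ℕ∞) < upd y →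
      pt x < pt y → pt x < (↑(scan y) : ℕ∞) := by
  intro x y hxy _ _ hlt
  by_contra h
  push_neg at h
  rcases lt_or_eq_of_le h with h' | h'
  · have hmem : pt x ∈ ({upd y} ∪ {t | ∃ z, dom z y ∧ (↑(scan y) : ℕ∞) < pt z ∧ pt z = t} : Set ℕ∞) :=
      Or.inr ⟨x, hxy, h', rfl⟩
    have : pt y ≤ pt x := by rw [hpt y]; exact sInf_le hmem
    exact absurd hlt (not_lt.mpr this)
  · rcases pt_eq_upd_aux dom hirr htrans scan upd pt hpt x with ⟨z, hz⟩
    exact hne z y (hz ▸ h'.symm)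
end

section
/- Assume additionally that upd z ≠ (↑(scan w) : ℕ∞) for all z, w ∈ V. Let x, y ∈ V satisfy: (↑(scan y) : ℕ∞) < upd x and (↑(scan x) : ℕ∞) < upd y (x and y are concurrent in the precedence graph), dom x y (x dominates y), and F x y. Then there exists z ∈ V such that dom z x, pt z = pt x, upd z = pt z, and upd z < (↑(scan y) : ℕ∞). -/
/-- Lemma 10 (forcedom): if a dominating operation `x` is nevertheless linearized
before a concurrent operation `y` that it dominates, then some operation `z`
dominating `x` precedes `y` in the precedence graph (`upd z < scan y`). -/
theorem force_dom {V : Type*} [Fintype V] (dom : V → V → Prop)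
    (hirr : ∀ x, ¬ dom x x)
    (htrans : ∀ x y z, dom x y → dom y z → dom x z)
    (scan : V → ℕ) (upd : V → ℕ∞)
    (hsu : ∀ x, (↑(scan x) : ℕ∞) < upd x)
    (pt : V → ℕ∞)
    (hpt : ∀ x, pt x =
      sInf ({upd x} ∪ {t | ∃ y, dom y x ∧ (↑(scan x) : ℕ∞) < pt y ∧ pt y = t}))
    (proc : V → ℕ)
    (F : V → V → Prop)
    (hF : ∀ x y, F x y ↔ pt x ≠ ⊤ ∧ pt y ≠ ⊤ ∧
      (pt x < pt y ∨ (pt x = pt y ∧ dom y x) ∨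
        (pt x = pt y ∧ ¬ dom y x ∧ ¬ dom x y ∧ proc x < proc y)))
    (hne : ∀ z w, upd z ≠ (↑(scan w) : ℕ∞)) :
    ∀ x y, (↑(scan y) : ℕ∞) < upd x → (↑(scan x) : ℕ∞) < upd y →
      dom x y → F x y →
      ∃ z, dom z x ∧ pt z = pt x ∧ upd z = pt z ∧ upd z < (↑(scan y) : ℕ∞) := by
  have : IsTrans V dom := ⟨htrans⟩
  have : IsIrrefl V dom := ⟨hirr⟩
  have hwf : WellFounded dom := Finite.wellFounded_of_trans_of_irrefl dom
  have key : ∀ z, ∃ w, (w = z ∨ dom w z) ∧ pt w = pt z ∧ upd w = pt w := by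
    intro z
    induction z using hwf.induction with
    | _ z ih =>
      have hS : pt z ∈ ({upd z} ∪
          {t | ∃ y, dom y z ∧ (↑(scan z) : ℕ∞) < pt y ∧ pt y = t} : Set ℕ∞) := by
        rw [hpt z]
        apply Set.Nonempty.csInf_mem
        · exact ⟨upd z, Or.inl rfl⟩
        · apply Set.Finite.union (Set.finite_singleton _)
          apply Set.Finite.subset (Set.finite_range pt)
          rintro t ⟨y, _, _, rfl⟩
          exact ⟨y, rfl⟩
      rcases hS with h | ⟨y', hd, _, hpe⟩
      · exact ⟨z, Or.inl rfl, rfl, (Set.mem_singleton_iff.mp h).symm⟩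
      · obtain ⟨w, hw, hpw, huw⟩ := ih y' hd
        refine ⟨w, Or.inr ?_, by rw [hpw, hpe], huw⟩
        rcases hw with rfl | hw
        · exact hd
        · exact htrans w y' z hw hd
  intro x y hyx hxy hdxy hFxy
  rw [hF] at hFxy
  obtain ⟨hx, hy, hcase⟩ := hFxy
  have hlt : pt x < pt y := by
    rcases hcase with h | ⟨_, h⟩ | ⟨_, _, h', _⟩
    · exact h
    · exact absurd (htrans x y x hdxy h) (hirr x)
    · exact absurd hdxy h'
  have hle : pt x ≤ (↑(scan y) : ℕ∞) := by
    by_contra h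
    push_neg at h
    have : pt y ≤ pt x := by
      rw [hpt y]
      exact csInf_le (OrderBot.bddBelow _) (Or.inr ⟨x, hdxy, h, rfl⟩)
    exact absurd hlt (not_lt.2 this)
  obtain ⟨w, hw, hpw, huw⟩ := key x
  rcases hw with rfl | hw
  · rw [hpw] at huw
    exact absurd hyx (not_lt.2 (huw.le.trans hle))
  · refine ⟨w, hw, hpw, huw, ?_⟩
    have h1 : upd w ≤ ↑(scan y) := by rw [huw, hpw]; exact hle
    exact lt_of_le_of_ne h1 (hne w y)
end

section
/- Assume additionally that upd z ≠ (↑(scan w) : ℕ∞) and upd z ≠ ⊤ for all z, w ∈ V, and that F is transitive. Let L : V → V → Prop be irreflexive and transitive and satisfy: (i) for all x, y ∈ V, upd x < (↑(scan y) : ℕ∞) implies L x y; and (ii) for all x₁, x₂ ∈ V, if L x₁ x₂, (↑(scan x₂) : ℕ∞) < upd x₁, (↑(scan x₁) : ℕ∞) < upd x₂, and dom x₁ x₂, then there exists x₃ ∈ V with L x₁ x₃, dom x₃ x₁, and upd x₃ < (↑(scan x₂) : ℕ∞). Then there is no pair x₁, x₂ ∈ V such that F x₁ x₂, L x₂ x₁,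 and dom x₁ x₂. -/
/-- Lemma 17 (nodominversion): the linearization order `F` never disagrees with a
topological ordering `L` of the linearization graph on a dominance-related pair. -/
theorem no_dom_inversion {V : Type*} [Fintype V] (dom : V → V → Prop)
    (hirr : ∀ x, ¬ dom x x)
    (htrans : ∀ x y z, dom x y → dom y z → dom x z)
    (scan : V → ℕ) (upd : V → ℕ∞)
    (hsu : ∀ x, (↑(scan x) : ℕ∞) < upd x)
    (pt : V → ℕ∞)
    (hpt : ∀ x, pt x =
      sInf ({upd x} ∪ {t | ∃ y, dom y x ∧ (↑(scan x) : ℕ∞) < pt y ∧ pt y = t}))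
    (proc : V → ℕ)
    (F : V → V → Prop)
    (hF : ∀ x y, F x y ↔ pt x ≠ ⊤ ∧ pt y ≠ ⊤ ∧
      (pt x < pt y ∨ (pt x = pt y ∧ dom y x) ∨
        (pt x = pt y ∧ ¬ dom y x ∧ ¬ dom x y ∧ proc x < proc y)))
    (hne : ∀ z w, upd z ≠ (↑(scan w) : ℕ∞))
    (hfin : ∀ z, upd z ≠ ⊤)
    (hFtrans : ∀ x y z, F x y → F y z → F x z)
    (L : V → V → Prop)
    (hLirr : ∀ x, ¬ L x x)
    (hLtrans : ∀ x y z, L x y → L y z → L x z)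
    (hLprec : ∀ x y, upd x < (↑(scan y) : ℕ∞) → L x y)
    (hLdombuffer : ∀ x₁ x₂, L x₁ x₂ → (↑(scan x₂) : ℕ∞) < upd x₁ →
      (↑(scan x₁) : ℕ∞) < upd x₂ → dom x₁ x₂ →
      ∃ x₃, L x₁ x₃ ∧ dom x₃ x₁ ∧ upd x₃ < (↑(scan x₂) : ℕ∞)) :
    ¬ ∃ x₁ x₂, F x₁ x₂ ∧ L x₂ x₁ ∧ dom x₁ x₂ := by
  -- the defining set of the pt-recursion is finite
  have hfinset : ∀ x, ({upd x} ∪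
      {t | ∃ y, dom y x ∧ (↑(scan x) : ℕ∞) < pt y ∧ pt y = t} : Set ℕ∞).Finite := by
    intro x
    apply Set.Finite.subset ((Set.finite_singleton (upd x)).union (Set.finite_range pt))
    rintro t (h | ⟨y, -, -, rfl⟩)
    · exact Or.inl h
    · exact Or.inr ⟨y, rfl⟩
  -- the infimum is attained
  have hmem : ∀ x, pt x = upd x ∨
      ∃ y, dom y x ∧ (↑(scan x) : ℕ∞) < pt y ∧ pt y = pt x := by
    intro x
    have hx : pt x ∈ ({upd x} ∪
        {t | ∃ y, dom y x ∧ (↑(scan x) : ℕ∞) < pt y ∧ pt y = t} : Set ℕ∞) := by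
      rw [hpt x]
      exact Set.Nonempty.csInf_mem ⟨upd x, Or.inl rfl⟩ (hfinset x)
    rcases hx with h | ⟨y, h1, h2, h3⟩
    · exact Or.inl h
    · exact Or.inr ⟨y, h1, h2, h3⟩
  have hptle : ∀ x, pt x ≤ upd x := by
    intro x
    rw [hpt x]
    exact sInf_le (Set.mem_union_left _ rfl)
  have hptne : ∀ x, pt x ≠ ⊤ :=
    fun x => ((hptle x).trans_lt (lt_top_iff_ne_top.mpr (hfin x))).ne
  have hscanpt : ∀ x, (↑(scan x) : ℕ∞) < pt x := by
    intro x
    rcases hmem x with h | ⟨y, -, h2, h3⟩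
    · exact h ▸ hsu x
    · exact h3 ▸ h2
  -- dominance is well-founded on a finite type
  haveI : IsTrans V dom := ⟨htrans⟩
  haveI : IsIrrefl V dom := ⟨hirr⟩
  have hwf : WellFounded dom := Finite.wellFounded_of_trans_of_irrefl dom
  -- chain lemma: the pt-recursion bottoms out at some dominating w with pt w = upd w
  have hchain : ∀ x, ∃ w, (w = x ∨ dom w x) ∧ upd w = pt x ∧ pt w = upd w := by
    intro x
    induction x using hwf.induction with
    | _ x IH =>
      rcases hmem x with h | ⟨y, hdyx, -, hpy⟩
      · exact ⟨x, Or.inl rfl, h.symm, h⟩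
      · obtain ⟨w, hw, hupd, hptw⟩ := IH y hdyx
        refine ⟨w, Or.inr ?_, by rw [hupd, hpy], hptw⟩
        rcases hw with rfl | h
        · exact hdyx
        · exact htrans w y x h hdyx
  rintro ⟨a₀, b₀, hF0, hL0, hd0⟩
  -- take a counterexample with minimal pt x₁
  obtain ⟨n, ⟨a, b, hpa, hFab, hLba, hdab⟩, hmin⟩ :=
    wellFounded_lt.has_min {n : ℕ∞ | ∃ a b, pt a = n ∧ F a b ∧ L b a ∧ dom a b}
      ⟨pt a₀, a₀, b₀, rfl, hF0, hL0, hd0⟩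
  -- rule K-1 must apply: pt a < pt b
  have hlt : pt a < pt b := by
    rcases (hF a b).mp hFab with ⟨-, -, h | ⟨-, hdba⟩ | ⟨-, -, hnd, -⟩⟩
    · exact h
    · exact absurd (htrans a b a hdab hdba) (hirr a)
    · exact absurd hdab hnd
  -- pt a ≤ scan b, else pt b ≤ pt a by the pt-recursion
  have hle : pt a ≤ (↑(scan b) : ℕ∞) := by
    by_contra h
    push_neg at h
    have : pt b ≤ pt a := by
      rw [hpt b]
      exact sInf_le (Set.mem_union_right _ ⟨a, hdab, h, rfl⟩)
    exact absurd hlt (not_lt.mpr this)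
  obtain ⟨w, hw, hupdw, hptw⟩ := hchain a
  have hub : upd w < (↑(scan b) : ℕ∞) :=
    lt_of_le_of_ne (hupdw ▸ hle) (hne w b)
  have hLwb : L w b := hLprec w b hub
  rcases hw with rfl | hdwa
  · exact hLirr w (hLtrans w b w hLwb hLba)
  · have hLwa : L w a := hLtrans w b a hLwb hLba
    -- apply the dominance buffer property to (w, a)
    obtain ⟨c, hLwc, hdcw, hucs⟩ :=
      hLdombuffer w a hLwa (hupdw ▸ hscanpt a) ((hscanpt w).trans_le ((hptw.le.trans hupdw.le).trans (hptle a))) hdwa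
    -- the pair (c, w) is a smaller counterexample
    have hpc : pt c < pt a := lt_of_le_of_lt ((hptle c).trans hucs.le) (hscanpt a)
    have hpcw : pt c < pt w := by rw [hptw, hupdw]; exact hpc
    have hFcw : F c w := (hF c w).mpr ⟨hptne c, hptne w, Or.inl hpcw⟩
    exact hmin (pt c) ⟨c, w, rfl, hFcw, hLwc, hdcw⟩ (hpa ▸ hpc)
end
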